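/- Fix an integer j ≥ 0. For π chosen uniformly at random from PF_n, let N₁(π) = #{i : π_i = 1} be the number of ones in π (note N₁(π) ≥ 1 always). Then P(N₁(π) = 1 + j) converges to 1/(e·j!) as n → ∞. -/

import Mathlib

/-- A parking function of size `n`, encoded as a list of length `n` with entries in
`{1, …, n}` such that for each `1 ≤ i ≤ n` at least `i` entries are `≤ i`. -/
def IsPFList (n : ℕ) (l : List ℕ) : Prop :=
  l.length = n ∧ (∀ x ∈ l, 1 ≤ x ∧ x ≤ n) ∧
  ∀ i : ℕ, 1 ≤ i → i ≤ n → i ≤ (l.filter (fun x => x ≤ i)).length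

/-!
Deleting the `K` cars that prefer spot 1 from a parking function of size `n` and lowering the
other preferences by one gives a function `w` from the remaining `m = n - K` cars to `Fin n`
under which every tail `[s, n)` receives fewer than `n - s` cars, and this is a bijection once
the set of deleted cars is fixed. By Pollak's cyclic argument exactly `n - m` of the `n` cyclic
shifts `w - c` have this property: with `g x` the number of cars sent to spot `x mod n`, the good
shifts are the strict record minima, during one period, of the skip-free walk
`t ↦ ∑_{i<t} g i - t`, whose running minimum drops by exactly `n - m` per period.
Hence there are `C(n-1, K-1) n^(n-K)` parking functions with `K` ones: the number of ones minus
one is binomial with parameters `n - 1` and `1/(n+1)`, and the Poisson limit theorem applies.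
-/

open Finset

lemma Fin.val_add_one_of_ne_zero {n : ℕ} [NeZero n] {a : Fin n} (h : a + 1 ≠ 0) :
    ((a + 1 : Fin n) : ℕ) = a + 1 := by
  obtain ⟨k, rfl⟩ := Nat.exists_eq_add_one_of_ne_zero (NeZero.ne n)
  rw [Fin.val_add_one, if_neg]
  rintro rfl
  exact h (Fin.last_add_one k)

lemma Fin.val_sub_eq_iff {n : ℕ} [NeZero n] {a c : Fin n} {y : ℕ} (hy : y < n) :
    ((a - c : Fin n) : ℕ) = y ↔ (a : ℕ) = (y + c) % n := by
  rw [← Fin.val_mk hy, Fin.val_inj, sub_eq_iff_eq_add, Fin.ext_iff, Fin.val_add]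

lemma List.length_filter_ofFn {n : ℕ} {β : Type*} (g : Fin n → β) (p : β → Bool) :
    ((List.ofFn g).filter p).length = #{i | p (g i)} := by
  simp only [List.ofFn_eq_map, List.filter_map, List.length_map, Fin.univ_def, card_def,
    filter_val, Multiset.filter_coe, Bool.decide_eq_true, Multiset.coe_card]
  rfl

namespace SkipFree

variable (g : ℕ → ℕ)

def walk (t : ℕ) : ℤ := ∑ i ∈ range t, (g i : ℤ) - t

def runMin (t : ℕ) : ℤ := (range (t + 1)).inf' nonempty_range_add_one (walk g)

def IsRecord (t : ℕ) : Prop := ∀ s < t, walk g t < walk g s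

instance : DecidablePred (IsRecord g) := fun t => inferInstanceAs (Decidable (∀ s < t, _))

variable {g}

lemma walk_succ (t : ℕ) : walk g (t + 1) = walk g t + g t - 1 := by
  simp only [walk, sum_range_succ]; push_cast; ring

lemma walk_sub_walk {s t : ℕ} (h : s ≤ t) :
    walk g t - walk g s = ∑ i ∈ Ico s t, (g i : ℤ) - (t - s) := by
  simp only [walk, ← sum_range_add_sum_Ico _ h]; ring

lemma walk_lt_walk_iff {s t : ℕ} (h : s ≤ t) :
    walk g t < walk g s ↔ ∑ i ∈ Ico s t, g i + s < t := by
  have := walk_sub_walk (g := g) h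
  rw [← Nat.cast_sum] at this
  omega

lemma runMin_le {s t : ℕ} (h : s ≤ t) : runMin g t ≤ walk g s :=
  inf'_le _ (mem_range_succ_iff.2 h)

lemma exists_walk_eq_runMin (t : ℕ) : ∃ s ≤ t, walk g s = runMin g t := by
  obtain ⟨s, hs, h⟩ := exists_mem_eq_inf' nonempty_range_add_one (walk g) (s := range (t + 1))
  exact ⟨s, mem_range_succ_iff.1 hs, h.symm⟩

lemma runMin_succ (t : ℕ) : runMin g (t + 1) = min (runMin g t) (walk g (t + 1)) := by
  apply le_antisymm
  · exact le_min (le_inf' _ _ fun s hs => runMin_le (by rw [mem_range] at hs; omega))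
      (runMin_le le_rfl)
  · obtain ⟨s, hs, hs_eq⟩ := exists_walk_eq_runMin (g := g) (t + 1)
    rw [← hs_eq]
    rcases hs.lt_or_eq with hs | rfl
    · exact (min_le_left _ _).trans (runMin_le (Nat.lt_succ_iff.1 hs))
    · exact min_le_right _ _

lemma isRecord_succ_iff (t : ℕ) : IsRecord g (t + 1) ↔ walk g (t + 1) < runMin g t := by
  refine ⟨fun h => ?_, fun h s hs => h.trans_le (runMin_le (Nat.lt_succ_iff.1 hs))⟩
  obtain ⟨s, hs, hs_eq⟩ := exists_walk_eq_runMin (g := g) t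
  exact hs_eq ▸ h s (Nat.lt_succ_of_le hs)

lemma runMin_sub_runMin_succ (t : ℕ) :
    runMin g t - runMin g (t + 1) = if IsRecord g (t + 1) then 1 else 0 := by
  have hstep : walk g t - 1 ≤ walk g (t + 1) := by rw [walk_succ]; omega
  have hmin : runMin g t ≤ walk g t := runMin_le le_rfl
  simp only [runMin_succ, isRecord_succ_iff]
  split_ifs <;> omega

lemma card_filter_isRecord_Ioc {a b : ℕ} (hab : a ≤ b) :
    (#{t ∈ Ioc a b | IsRecord g t} : ℤ) = runMin g a - runMin g b := by
  induction b, hab using Nat.le_induction with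
  | base => simp
  | succ b hab ih =>
    rw [card_filter, Nat.cast_sum, sum_Ioc_succ_top hab, ← Nat.cast_sum, ← card_filter, ih]
    have := runMin_sub_runMin_succ (g := g) b
    split_ifs at this ⊢ <;> push_cast <;> omega

section Periodic

variable {n m : ℕ} (hg : Function.Periodic g n) (hm : ∑ i ∈ range n, g i = m)
include hg hm

lemma walk_add_period (t : ℕ) : walk g (t + n) = walk g t - (n - m) := by
  induction t with
  | zero => simp [walk, ← hm]
  | succ t ih => rw [Nat.add_right_comm, walk_succ, walk_succ, ih, hg t]; ring

variable (hmn : m ≤ n)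
include hmn

lemma runMin_add_period {a : ℕ} (ha : n ≤ a + 1) : runMin g (a + n) = runMin g a - (n - m) := by
  apply le_antisymm
  · obtain ⟨s, hs, hs_eq⟩ := exists_walk_eq_runMin (g := g) a
    calc runMin g (a + n) ≤ walk g (s + n) := runMin_le (by omega)
      _ = runMin g a - (n - m) := by rw [walk_add_period hg hm, hs_eq]
  · refine le_inf' _ _ fun s hs => ?_
    rw [mem_range] at hs
    rcases le_or_gt s a with h | h
    · have := runMin_le (g := g) h
      omega
    · obtain ⟨q, rfl⟩ : ∃ q, s = q + n := ⟨s - n, by omega⟩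
      have := runMin_le (g := g) (show q ≤ a by omega)
      rw [walk_add_period hg hm]
      omega

lemma isRecord_iff_of_periodic (hn : 0 < n) {t : ℕ} :
    IsRecord g t ↔ ∀ s < t, t ≤ s + n → walk g t < walk g s := by
  refine ⟨fun h s hs _ => h s hs, fun h => ?_⟩
  suffices ∀ k s, t - s = k → s < t → walk g t < walk g s from fun s hs => this _ s rfl hs
  intro k
  induction k using Nat.strong_induction_on with
  | _ k ih =>
    intro s hk hs
    by_cases hsn : t ≤ s + n
    · exact h s hs hsn
    · calc walk g t < walk g (s + n) := ih _ (by omega) _ rfl (by omega)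
        _ ≤ walk g s := by rw [walk_add_period hg hm]; omega

theorem card_filter_isRecord_Ioc_add_period {a : ℕ} (ha : n ≤ a + 1) :
    #{t ∈ Ioc a (a + n) | IsRecord g t} = n - m := by
  have := card_filter_isRecord_Ioc (g := g) (Nat.le_add_right a n)
  rw [runMin_add_period hg hm hmn ha] at this
  omega

end Periodic

end SkipFree

open SkipFree

namespace ParkingFunction

section TailSparse

variable {ι : Type*} [Fintype ι] {n : ℕ}

def IsTailSparse (w : ι → Fin n) : Prop := ∀ s < n, #{i | s ≤ (w i : ℕ)} + s < n

instance : DecidablePred (IsTailSparse (ι := ι) (n := n)) :=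
  fun _ => inferInstanceAs (Decidable (∀ s < n, _))

def fiberCount (w : ι → Fin n) (x : ℕ) : ℕ := #{i | (w i : ℕ) = x % n}

lemma fiberCount_periodic (w : ι → Fin n) : Function.Periodic (fiberCount w) n := by
  intro x
  simp [fiberCount]

lemma sum_range_fiberCount (w : ι → Fin n) :
    ∑ x ∈ range n, fiberCount w x = Fintype.card ι := by
  rw [← card_univ, card_eq_sum_card_fiberwise (f := fun i => (w i : ℕ)) (t := range n)
    (fun i _ => mem_range.2 (w i).isLt)]
  refine sum_congr rfl fun x hx => ?_
  simp [fiberCount, Nat.mod_eq_of_lt (mem_range.1 hx)]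

variable [NeZero n]

lemma IsTailSparse.add_one_ne_zero {w : ι → Fin n} (hw : IsTailSparse w) (i : ι) :
    w i + 1 ≠ 0 := by
  have hn := Nat.pos_of_neZero n
  have hlt : (w i : ℕ) + 1 < n := by
    have hempty : #{j | n - 1 ≤ (w j : ℕ)} = 0 := by have := hw (n - 1) (by omega); omega
    rw [card_eq_zero, filter_eq_empty_iff] at hempty
    have := hempty (mem_univ i)
    omega
  rw [Ne, Fin.ext_iff, Fin.val_add_one_of_lt' hlt]
  simp

lemma card_le_val_sub_eq_sum_fiberCount (w : ι → Fin n) (c : Fin n) (s : ℕ) :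
    #{i | s ≤ ((w i - c : Fin n) : ℕ)} = ∑ x ∈ Ico (s + c) (n + c), fiberCount w x := by
  rw [card_eq_sum_card_fiberwise (f := fun i => ((w i - c : Fin n) : ℕ)) (t := Ico s n)
    (fun i hi => mem_Ico.2 ⟨(mem_filter.1 hi).2, (w i - c).isLt⟩), ← sum_Ico_add']
  refine sum_congr rfl fun y hy => ?_
  rw [mem_Ico] at hy
  simp only [fiberCount, filter_filter]
  congr 1
  ext i
  simp only [mem_filter, mem_univ, true_and, ← Fin.val_sub_eq_iff hy.2]
  exact ⟨And.right, fun h => ⟨h ▸ hy.1, h⟩⟩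

lemma isTailSparse_sub_iff_isRecord (w : ι → Fin n) (hι : Fintype.card ι ≤ n) (c : Fin n) :
    IsTailSparse (fun i => w i - c) ↔ IsRecord (fiberCount w) (n + c) := by
  rw [isRecord_iff_of_periodic (fiberCount_periodic w) (sum_range_fiberCount w) hι
    (Nat.pos_of_neZero n)]
  dsimp only [IsTailSparse]
  constructor
  · intro h s hs hsn
    obtain ⟨s', rfl⟩ : ∃ s', s = s' + c := ⟨s - c, by omega⟩
    have := h s' (by omega)
    rw [walk_lt_walk_iff (by omega), ← card_le_val_sub_eq_sum_fiberCount w c]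
    omega
  · intro h s hs
    have := h (s + c) (by omega) (by omega)
    rw [walk_lt_walk_iff (by omega), ← card_le_val_sub_eq_sum_fiberCount w c] at this
    omega

lemma card_isTailSparse_sub (w : ι → Fin n) (hι : Fintype.card ι ≤ n) :
    #{c : Fin n | IsTailSparse fun i => w i - c} = n - Fintype.card ι := by
  have hn := Nat.pos_of_neZero n
  rw [← card_filter_isRecord_Ioc_add_period (fiberCount_periodic w) (sum_range_fiberCount w) hι
    (a := n - 1) (by omega)]
  refine card_bij (fun c _ => n + c) (fun c hc => ?_) (fun c _ d _ h => ?_) (fun t ht => ?_)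
  · rw [mem_filter, isTailSparse_sub_iff_isRecord w hι] at hc
    exact mem_filter.2 ⟨mem_Ioc.2 ⟨by omega, by omega⟩, hc.2⟩
  · exact Fin.val_injective (by omega)
  · rw [mem_filter, mem_Ioc] at ht
    have hnt : n + (t - n) = t := Nat.add_sub_cancel' (by omega)
    refine ⟨⟨t - n, by omega⟩, mem_filter.2 ⟨mem_univ _, ?_⟩, hnt⟩
    rw [isTailSparse_sub_iff_isRecord w hι, Fin.val_mk, hnt]
    exact ht.2

theorem card_isTailSparse_mul [DecidableEq ι] (hι : Fintype.card ι ≤ n) :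
    #{w : ι → Fin n | IsTailSparse w} * n = (n - Fintype.card ι) * n ^ Fintype.card ι := by
  have hshift (c : Fin n) :
      #{w : ι → Fin n | IsTailSparse fun i => w i - c} = #{w : ι → Fin n | IsTailSparse w} :=
    card_equiv (Equiv.subRight (Function.const ι c)) fun _ => by simp [Pi.sub_def]
  calc #{w : ι → Fin n | IsTailSparse w} * n
      = ∑ c : Fin n, #{w : ι → Fin n | IsTailSparse fun i => w i - c} := by
        simp [hshift, mul_comm]
    _ = ∑ w : ι → Fin n, #{c : Fin n | IsTailSparse fun i => w i - c} := by
      simp only [card_filter]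
      exact sum_comm
    _ = (n - Fintype.card ι) * n ^ Fintype.card ι := by
      simp [card_isTailSparse_sub _ hι, mul_comm]

end TailSparse

section Parking

variable {α : Type*} [Fintype α] {n : ℕ}

/-- Spots are numbered from `0`: car `x` prefers spot `f x`. -/
def IsParking (f : α → Fin n) : Prop := ∀ s < n, s < #{x | (f x : ℕ) ≤ s}

instance : DecidablePred (IsParking (α := α) (n := n)) :=
  fun _ => inferInstanceAs (Decidable (∀ s < n, _))

variable [NeZero n] [DecidableEq α] {S : Finset α} {f : α → Fin n} {w : ↥Sᶜ → Fin n}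

lemma card_val_le_add_card_le_val (hS : ∀ x, f x = 0 ↔ x ∈ S) (hw : ∀ i : ↥Sᶜ, f i = w i + 1)
    (s : ℕ) : #{x | (f x : ℕ) ≤ s} + #{i | s ≤ (w i : ℕ)} = Fintype.card α := by
  have hval (i : ↥Sᶜ) : (f i : ℕ) = w i + 1 := by
    have hne : f i ≠ 0 := fun h0 => mem_compl.1 i.2 ((hS i).1 h0)
    rw [hw] at hne ⊢
    exact Fin.val_add_one_of_ne_zero hne
  have hS_le : ∑ x ∈ S, (if (f x : ℕ) ≤ s then 1 else 0) = #S := by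
    rw [card_eq_sum_ones]
    exact sum_congr rfl fun x hx => by simp [(hS x).2 hx]
  have hSc : ∑ x ∈ Sᶜ, (if (f x : ℕ) ≤ s then 1 else 0) + #{i | s ≤ (w i : ℕ)} = #Sᶜ := by
    rw [← sum_coe_sort, card_filter, ← sum_add_distrib, ← Fintype.card_coe,
      Fintype.card_eq_sum_ones]
    refine sum_congr rfl fun i _ => ?_
    rw [hval]
    split_ifs <;> omega
  rw [card_filter, ← sum_add_sum_compl S, hS_le, add_assoc, hSc, card_add_card_compl]

lemma isParking_iff_isTailSparse (hα : Fintype.card α = n) (hS : ∀ x, f x = 0 ↔ x ∈ S)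
    (hw : ∀ i : ↥Sᶜ, f i = w i + 1) : IsParking f ↔ IsTailSparse w :=
  forall₂_congr fun s _ => by
    have := card_val_le_add_card_le_val hS hw s
    omega

lemma card_isParking_zeroSet (hα : Fintype.card α = n) (S : Finset α) :
    #{f : α → Fin n | IsParking f ∧ ∀ x, f x = 0 ↔ x ∈ S} =
      #{w : ↥Sᶜ → Fin n | IsTailSparse w} := by
  refine card_nbij' (fun f i => f i - 1)
    (fun w x => if h : x ∈ S then 0 else w ⟨x, mem_compl.2 h⟩ + 1) ?_ ?_ ?_ ?_
  · intro f hf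
    simp only [coe_filter, mem_univ, true_and, Set.mem_ofPred_eq] at hf ⊢
    exact (isParking_iff_isTailSparse hα hf.2 fun i => (sub_add_cancel _ _).symm).1 hf.1
  · intro w hw
    simp only [coe_filter, mem_univ, true_and, Set.mem_ofPred_eq] at hw ⊢
    have hS (x : α) : (if h : x ∈ S then 0 else w ⟨x, mem_compl.2 h⟩ + 1) = 0 ↔ x ∈ S := by
      by_cases hx : x ∈ S
      · simp [hx]
      · simpa [hx] using hw.add_one_ne_zero _
    exact ⟨(isParking_iff_isTailSparse hα hS fun i => by simp [mem_compl.1 i.2]).2 hw, hS⟩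
  · intro f hf
    simp only [coe_filter, mem_univ, true_and, Set.mem_ofPred_eq] at hf
    funext x
    by_cases hx : x ∈ S
    · simp [hx, ((hf.2 x).2 hx).symm]
    · simp [hx]
  · intro w _
    funext i
    simp [mem_compl.1 i.2]

lemma card_isParking_card_zero_eq_sum (hα : Fintype.card α = n) (K : ℕ) :
    #{f : α → Fin n | IsParking f ∧ #{x | f x = 0} = K} =
      ∑ S ∈ powersetCard K (univ : Finset α), #{w : ↥Sᶜ → Fin n | IsTailSparse w} := by
  rw [card_eq_sum_card_fiberwise (f := fun f : α → Fin n => ({x | f x = 0} : Finset α))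
    (t := powersetCard K univ) fun f hf =>
      mem_powersetCard.2 ⟨subset_univ _, (mem_filter.1 hf).2.2⟩]
  refine sum_congr rfl fun S hS => ?_
  rw [← card_isParking_zeroSet hα S, filter_filter]
  refine congrArg card (filter_congr fun f _ => ?_)
  simp only [Finset.ext_iff, mem_filter, mem_univ, true_and]
  constructor
  · exact fun h => ⟨h.1.1, h.2⟩
  · rintro ⟨hf, hS'⟩
    refine ⟨⟨hf, ?_⟩, hS'⟩
    rw [← (mem_powersetCard.1 hS).2]
    congr 1
    ext x
    simp [hS']

theorem card_isParking_card_zero_mul (hα : Fintype.card α = n) (K : ℕ) :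
    #{f : α → Fin n | IsParking f ∧ #{x | f x = 0} = K} * n = n.choose K * K * n ^ (n - K) := by
  rw [card_isParking_card_zero_eq_sum hα]
  rcases le_or_gt K n with hK | hK
  · have hG (S : Finset α) (hS : S ∈ powersetCard K univ) :
        #{w : ↥Sᶜ → Fin n | IsTailSparse w} * n = K * n ^ (n - K) := by
      have hcard : Fintype.card ↥Sᶜ = n - K := by
        rw [Fintype.card_coe, card_compl, hα, (mem_powersetCard.1 hS).2]
      rw [card_isTailSparse_mul (hcard ▸ Nat.sub_le n K), hcard, Nat.sub_sub_self hK]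
    rw [sum_mul, sum_congr rfl hG, sum_const, card_powersetCard, card_univ, hα, smul_eq_mul,
      mul_assoc]
  · rw [powersetCard_eq_empty.2 (by rwa [card_univ, hα]), Nat.choose_eq_zero_of_lt hK]
    simp

end Parking

theorem card_isParking_card_zero_eq (N j : ℕ) :
    #{f : Fin (N + 1) → Fin (N + 1) | IsParking f ∧ #{x | f x = 0} = j + 1}
      = N.choose j * (N + 1) ^ (N - j) := by
  have h := card_isParking_card_zero_mul (Fintype.card_fin (N + 1)) (j + 1)
  rw [← Nat.add_one_mul_choose_eq, Nat.add_sub_add_right] at h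
  exact Nat.eq_of_mul_eq_mul_right (by omega : 0 < N + 1) (by rw [h]; ring)

section Lists

variable {n : ℕ}

lemma isPFList_ofFn_iff (f : Fin n → Fin n) :
    IsPFList n (List.ofFn fun i => (f i : ℕ) + 1) ↔ IsParking f := by
  simp only [IsPFList, List.length_ofFn, List.mem_ofFn, List.length_filter_ofFn, true_and]
  have hbounds : ∀ x, (∃ i, (f i : ℕ) + 1 = x) → 1 ≤ x ∧ x ≤ n := by
    rintro _ ⟨i, rfl⟩
    have := (f i).isLt
    omega
  rw [and_iff_right hbounds]
  constructor
  · intro h s hs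
    simpa using h (s + 1) (by omega) hs
  · intro h i hi hin
    obtain ⟨s, rfl⟩ : ∃ s, i = s + 1 := ⟨i - 1, by omega⟩
    simpa using h s (by omega)

lemma count_one_ofFn [NeZero n] (f : Fin n → Fin n) :
    (List.ofFn fun i => (f i : ℕ) + 1).count 1 = #{i | f i = 0} := by
  rw [List.count_eq_length_filter, List.length_filter_ofFn]
  congr 1
  ext i
  simp only [mem_filter, mem_univ, true_and, beq_iff_eq, Nat.add_eq_right, Fin.val_eq_zero_iff]

lemma ofFn_add_one_injective :
    Function.Injective fun f : Fin n → Fin n => List.ofFn fun i => (f i : ℕ) + 1 :=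
  fun _ _ h => funext fun i => Fin.ext (by simpa using congrFun (List.ofFn_injective h) i)

lemma setOf_isPFList_eq_image [NeZero n] (K : ℕ) :
    {l | IsPFList n l ∧ l.count 1 = K} =
      (fun f : Fin n → Fin n => List.ofFn fun i => (f i : ℕ) + 1) ''
        {f | IsParking f ∧ #{i | f i = 0} = K} := by
  ext l
  constructor
  · rintro ⟨hl, rfl⟩
    have ⟨hlen, hmem, _⟩ := hl
    have hbound (i : ℕ) (h : i < l.length) : 1 ≤ l[i] ∧ l[i] ≤ n := hmem _ (List.getElem_mem h)
    let f : Fin n → Fin n := fun i => ⟨l[(i : ℕ)] - 1, by have := hbound i (by omega); omega⟩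
    have hf : (List.ofFn fun i => (f i : ℕ) + 1) = l :=
      List.ext_getElem (by simp [hlen]) fun i _ hi => by
        simp only [List.getElem_ofFn, f]
        have := hbound i hi
        omega
    refine ⟨f, ⟨(isPFList_ofFn_iff f).1 (hf ▸ hl), ?_⟩, hf⟩
    rw [← count_one_ofFn, hf]
  · rintro ⟨f, ⟨hf, hK⟩, rfl⟩
    exact ⟨(isPFList_ofFn_iff f).2 hf, (count_one_ofFn f).trans hK⟩

end Lists

lemma ncard_isPFList_count_one (N j : ℕ) :
    {l | IsPFList (N + 1) l ∧ l.count 1 = 1 + j}.ncard = N.choose j * (N + 1) ^ (N - j) := by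
  rw [setOf_isPFList_eq_image, Set.ncard_image_of_injective _ ofFn_add_one_injective,
    ← coe_filter_univ, Set.ncard_coe_finset, add_comm 1 j, card_isParking_card_zero_eq]

end ParkingFunction

open Filter Topology

lemma choose_mul_pow_div_pow_eq (N j : ℕ) :
    (N.choose j * ((N : ℝ) + 1) ^ (N - j)) / ((N : ℝ) + 2) ^ N
      = N.choose j * (1 / ((N : ℝ) + 2)) ^ j * (1 - 1 / ((N : ℝ) + 2)) ^ (N - j) := by
  rcases le_or_gt j N with h | h
  · have hN : (N : ℝ) + 2 ≠ 0 := by positivity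
    rw [one_sub_div hN, div_pow, div_pow, ← Nat.add_sub_cancel' h, pow_add, Nat.add_sub_cancel_left]
    field_simp
    ring
  · simp [Nat.choose_eq_zero_of_lt h]

theorem stmt16 (j : ℕ) :
    Filter.Tendsto
      (fun n : ℕ =>
        (Set.ncard {l : List ℕ | IsPFList n l ∧ l.count 1 = 1 + j} : ℝ) /
          ((n : ℝ) + 1) ^ (n - 1))
      Filter.atTop (nhds (1 / (Real.exp 1 * (Nat.factorial j : ℝ)))) := by
  rw [← tendsto_add_atTop_iff_nat 1]
  have hp : Tendsto (fun N : ℕ => (N : ℝ) * (1 / ((N : ℝ) + 2))) atTop (𝓝 1) := by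
    simpa [div_eq_mul_inv] using tendsto_natCast_div_add_atTop (2 : ℝ)
  convert ProbabilityTheory.tendsto_choose_mul_pow_of_tendsto_mul_atTop j hp using 1
  · funext N
    rw [ParkingFunction.ncard_isPFList_count_one, ← choose_mul_pow_div_pow_eq]
    push_cast
    ring_nf
  · rw [Real.exp_neg, one_pow]
    field_simp
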